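/- Let Z be a WTRO in B(H) and let M ⊆ B(H) be a unital weak*-closed subalgebra such that Z* Z ⊆ M (so that the weak*-closed span of Z* Z is contained in M). Let Y be the weak* closure of Z M in B(H). Then Y is a weak*-closed right M-module (Y M ⊆ Y), Z ⊆ Y, Y* Y ⊆ weak*-closure(M* Z* Z M), Z Z* Y ⊆ Y, and the usual approximate identity (e_t) of Z Z* (with terms Σ_k z_k z_k*, ‖Σ z_k z_k*‖ ≤ 1) satisfies e_t y → y weak* for every y ∈ Y. -/

import Mathlib

open Filter Topology

/-- The σ-weak (weak*) topology on `B(H,K)`: the initial topology induced by the normal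
functionals `T ↦ ∑ₙ ⟪η n, T (ξ n)⟫` with `(ξ n)`, `(η n)` square-summable families. -/
noncomputable def sigmaWeak (H K : Type*) [NormedAddCommGroup H] [InnerProductSpace ℂ H]
    [NormedAddCommGroup K] [InnerProductSpace ℂ K] : TopologicalSpace (H →L[ℂ] K) :=
  ⨅ (ξ : ℕ → H) (η : ℕ → K) (_ : Summable fun n => ‖ξ n‖ ^ 2)
    (_ : Summable fun n => ‖η n‖ ^ 2),
    TopologicalSpace.induced (fun T => ∑' n, (inner ℂ (η n) (T (ξ n)) : ℂ)) inferInstance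

set_option linter.unusedSectionVars false
section Aux
variable {H : Type*} [NormedAddCommGroup H] [InnerProductSpace ℂ H] [CompleteSpace H]

lemma sw_cont_tsum (ξ η : ℕ → H) (hξ : Summable fun n => ‖ξ n‖ ^ 2)
    (hη : Summable fun n => ‖η n‖ ^ 2) :
    @Continuous _ _ (sigmaWeak H H) _
      (fun T : H →L[ℂ] H => ∑' n, (inner ℂ (η n) (T (ξ n)) : ℂ)) := by
  rw [sigmaWeak]
  exact continuous_iInf_dom (i := ξ) (continuous_iInf_dom (i := η)
    (continuous_iInf_dom (i := hξ) (continuous_iInf_dom (i := hη) continuous_induced_dom)))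

lemma sw_cont_point (v w : H) :
    @Continuous _ _ (sigmaWeak H H) _ (fun T : H →L[ℂ] H => (inner ℂ v (T w) : ℂ)) := by
  have hξ : Summable fun n : ℕ => ‖(if n = 0 then w else 0 : H)‖ ^ 2 := by
    apply summable_of_ne_finset_zero (s := {0})
    intro n hn
    simp only [Finset.mem_singleton] at hn
    simp [hn]
  have hη : Summable fun n : ℕ => ‖(if n = 0 then v else 0 : H)‖ ^ 2 := by
    apply summable_of_ne_finset_zero (s := {0})
    intro n hn
    simp only [Finset.mem_singleton] at hn
    simp [hn]
  have h := sw_cont_tsum (fun n => if n = 0 then w else 0) (fun n => if n = 0 then v else 0) hξ hη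
  convert h using 2 with T
  rw [tsum_eq_single 0]
  · simp
  · intro n hn; simp [hn]

lemma sw_sq_summable (a : H →L[ℂ] H) {ξ : ℕ → H} (hξ : Summable fun n => ‖ξ n‖ ^ 2) :
    Summable fun n => ‖a (ξ n)‖ ^ 2 := by
  refine Summable.of_nonneg_of_le (fun n => sq_nonneg _) (fun n => ?_) (hξ.mul_left (‖a‖ ^ 2))
  calc ‖a (ξ n)‖ ^ 2 ≤ (‖a‖ * ‖ξ n‖) ^ 2 :=
        pow_le_pow_left₀ (norm_nonneg _) (a.le_opNorm _) 2
    _ = ‖a‖ ^ 2 * ‖ξ n‖ ^ 2 := by ring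

lemma sw_cont_rmul (m : H →L[ℂ] H) :
    @Continuous _ _ (sigmaWeak H H) (sigmaWeak H H) (fun T : H →L[ℂ] H => T * m) := by
  unfold sigmaWeak
  refine continuous_iInf_rng.2 fun ξ => continuous_iInf_rng.2 fun η =>
    continuous_iInf_rng.2 fun hξ => continuous_iInf_rng.2 fun hη =>
    continuous_induced_rng.2 ?_
  have : (fun T : H →L[ℂ] H => ∑' n, (inner ℂ (η n) ((T * m) (ξ n)) : ℂ))
      = fun T : H →L[ℂ] H => ∑' n, (inner ℂ (η n) (T (m (ξ n))) : ℂ) := by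
    funext T; simp [ContinuousLinearMap.mul_apply]
  rw [Function.comp_def, this]
  exact sw_cont_tsum _ _ (sw_sq_summable m hξ) hη

lemma sw_cont_lmul (a : H →L[ℂ] H) :
    @Continuous _ _ (sigmaWeak H H) (sigmaWeak H H) (fun T : H →L[ℂ] H => a * T) := by
  unfold sigmaWeak
  refine continuous_iInf_rng.2 fun ξ => continuous_iInf_rng.2 fun η =>
    continuous_iInf_rng.2 fun hξ => continuous_iInf_rng.2 fun hη =>
    continuous_induced_rng.2 ?_
  have : (fun T : H →L[ℂ] H => ∑' n, (inner ℂ (η n) ((a * T) (ξ n)) : ℂ))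
      = fun T : H →L[ℂ] H => ∑' n, (inner ℂ ((ContinuousLinearMap.adjoint a) (η n)) (T (ξ n)) : ℂ) := by
    funext T; congr 1; funext n
    rw [ContinuousLinearMap.mul_apply, ContinuousLinearMap.adjoint_inner_left]
  rw [Function.comp_def, this]
  exact sw_cont_tsum _ _ hξ (sw_sq_summable (ContinuousLinearMap.adjoint a) hη)

lemma sw_cont_star :
    @Continuous _ _ (sigmaWeak H H) (sigmaWeak H H) (fun T : H →L[ℂ] H => star T) := by
  unfold sigmaWeak
  refine continuous_iInf_rng.2 fun ξ => continuous_iInf_rng.2 fun η =>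
    continuous_iInf_rng.2 fun hξ => continuous_iInf_rng.2 fun hη =>
    continuous_induced_rng.2 ?_
  have : (fun T : H →L[ℂ] H => ∑' n, (inner ℂ (η n) ((star T) (ξ n)) : ℂ))
      = fun T : H →L[ℂ] H => star (∑' n, (inner ℂ (ξ n) (T (η n)) : ℂ)) := by
    funext T
    rw [tsum_star]
    congr 1; funext n
    rw [ContinuousLinearMap.star_eq_adjoint, ContinuousLinearMap.adjoint_inner_right]
    exact (inner_conj_symm _ _).symm
  rw [Function.comp_def, this]
  exact @Continuous.comp _ _ _ (sigmaWeak H H) inferInstance inferInstance _ _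
    continuous_star (sw_cont_tsum _ _ hη hξ)

end Aux

/-- Let `Z` be a WTRO in `B(H)` with `Z* Z ⊆ M` for a unital
weak*-closed subalgebra `M ⊆ B(H)`, and let `Y` be the weak* closure of (the span of)
`Z M`.  Then `Y` is a weak*-closed right `M`-module containing `Z`, with
`Y* Y ⊆ w*-closure(span (M* Z* Z M))` and `Z Z* Y ⊆ Y`, and the usual approximate
identity `(e_t)` of (the weak*-closed span `N` of) `Z Z*` satisfies `e_t y → y` weak*
for every `y ∈ Y`. -/
theorem stmt17 (H : Type*) [NormedAddCommGroup H] [InnerProductSpace ℂ H] [CompleteSpace H]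
    -- Z : a WTRO
    (Z : Submodule ℂ (H →L[ℂ] H))
    (hZclosed : @IsClosed _ (sigmaWeak H H) (Z : Set (H →L[ℂ] H)))
    (hWTRO : ∀ z₁ ∈ Z, ∀ z₂ ∈ Z, ∀ z₃ ∈ Z, z₁ * star z₂ * z₃ ∈ Z)
    -- M : a unital weak*-closed subalgebra with Z* Z ⊆ M
    (M : Submodule ℂ (H →L[ℂ] H))
    (hMclosed : @IsClosed _ (sigmaWeak H H) (M : Set (H →L[ℂ] H)))
    (hM1 : (1 : H →L[ℂ] H) ∈ M) (hMM : ∀ a ∈ M, ∀ b ∈ M, a * b ∈ M)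
    (hZZM : ∀ z ∈ Z, ∀ w ∈ Z, star z * w ∈ M)
    -- Y : the weak* closure of Z M ;  N : the weak*-closed span of Z Z*
    (Y N : Set (H →L[ℂ] H))
    (hY : Y = @closure _ (sigmaWeak H H)
      ((Submodule.span ℂ {x | ∃ z ∈ Z, ∃ m ∈ M, x = z * m} : Submodule ℂ (H →L[ℂ] H)) :
        Set (H →L[ℂ] H)))
    (hN : N = @closure _ (sigmaWeak H H)
      ((Submodule.span ℂ {x | ∃ z ∈ Z, ∃ w ∈ Z, x = z * star w} : Submodule ℂ (H →L[ℂ] H)) :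
        Set (H →L[ℂ] H)))
    -- the usual approximate identity of Z Z*, converging weak* to the identity of N
    (ι : Type*) [Nonempty ι] [SemilatticeSup ι]
    (et : ι → (H →L[ℂ] H))
    (hform : ∀ t, ∃ (n : ℕ) (z : Fin n → (H →L[ℂ] H)),
      (∀ k, z k ∈ Z) ∧ et t = ∑ k, z k * star (z k) ∧ ‖et t‖ ≤ 1)
    (u : H →L[ℂ] H) (huN : u ∈ N)
    (hconv : Tendsto et atTop (@nhds (H →L[ℂ] H) (sigmaWeak H H) u))
    (hu : ∀ a ∈ N, u * a = a ∧ a * u = a) :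
    (∀ y ∈ Y, ∀ m ∈ M, y * m ∈ Y) ∧
    ((Z : Set (H →L[ℂ] H)) ⊆ Y) ∧
    (∀ y₁ ∈ Y, ∀ y₂ ∈ Y, star y₁ * y₂ ∈ @closure _ (sigmaWeak H H)
      ((Submodule.span ℂ {x | ∃ m₁ ∈ M, ∃ z₁ ∈ Z, ∃ z₂ ∈ Z, ∃ m₂ ∈ M,
          x = star m₁ * (star z₁ * z₂) * m₂} : Submodule ℂ (H →L[ℂ] H)) :
        Set (H →L[ℂ] H))) ∧
    (∀ a ∈ Z, ∀ b ∈ Z, ∀ y ∈ Y, a * star b * y ∈ Y) ∧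
    (∀ y ∈ Y, Tendsto (fun t => et t * y) atTop (@nhds (H →L[ℂ] H) (sigmaWeak H H) y)) := by
  letI : TopologicalSpace (H →L[ℂ] H) := sigmaWeak H H
  set S : Submodule ℂ (H →L[ℂ] H) :=
    Submodule.span ℂ {x | ∃ z ∈ Z, ∃ m ∈ M, x = z * m} with hSdef
  set W : Submodule ℂ (H →L[ℂ] H) :=
    Submodule.span ℂ {x | ∃ m₁ ∈ M, ∃ z₁ ∈ Z, ∃ z₂ ∈ Z, ∃ m₂ ∈ M,
      x = star m₁ * (star z₁ * z₂) * m₂} with hWdef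
  set P : Submodule ℂ (H →L[ℂ] H) :=
    Submodule.span ℂ {x | ∃ z ∈ Z, ∃ w ∈ Z, x = z * star w} with hPdef
  -- Part 1 : right module, algebraic part
  have key1 : ∀ m ∈ M, ∀ x ∈ S, x * m ∈ S := by
    intro m hm x hx
    refine Submodule.span_induction ?_ ?_ ?_ ?_ hx
    · rintro x ⟨z, hz, m', hm', rfl⟩
      exact Submodule.subset_span ⟨z, hz, m' * m, hMM _ hm' _ hm, (mul_assoc _ _ _).symm⟩
    · rw [zero_mul]; exact S.zero_mem
    · intro a b _ _ ha hb; rw [add_mul]; exact S.add_mem ha hb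
    · intro c a _ ha; rw [smul_mul_assoc]; exact S.smul_mem c ha
  have part1 : ∀ y ∈ Y, ∀ m ∈ M, y * m ∈ Y := by
    intro y hy m hm
    rw [hY] at hy ⊢
    have hc : Continuous (fun T : H →L[ℂ] H => T * m) := sw_cont_rmul m
    exact (Set.MapsTo.closure (fun x hx => key1 m hm x hx) hc) hy
  -- Part 2 : Z ⊆ Y
  have part2 : (Z : Set (H →L[ℂ] H)) ⊆ Y := by
    intro z hz
    rw [hY]
    exact subset_closure (Submodule.subset_span ⟨z, hz, 1, hM1, (mul_one z).symm⟩)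
  -- Part 3
  have stepA : ∀ x ∈ S, ∀ y ∈ S, star x * y ∈ W := by
    intro x hx
    refine Submodule.span_induction (p := fun x _ => ∀ y ∈ S, star x * y ∈ W)
      ?_ ?_ ?_ ?_ hx
    · rintro x ⟨z, hz, m, hm, rfl⟩ y hy
      refine Submodule.span_induction ?_ ?_ ?_ ?_ hy
      · rintro y ⟨z', hz', m', hm', rfl⟩
        refine Submodule.subset_span ⟨m, hm, z, hz, z', hz', m', hm', ?_⟩
        simp [star_mul, mul_assoc]
      · rw [mul_zero]; exact W.zero_mem
      · intro a b _ _ ha hb; rw [mul_add]; exact W.add_mem ha hb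
      · intro c a _ ha; rw [mul_smul_comm]; exact W.smul_mem c ha
    · intro y _; rw [star_zero, zero_mul]; exact W.zero_mem
    · intro a b _ _ ha hb y hy; rw [star_add, add_mul]
      exact W.add_mem (ha y hy) (hb y hy)
    · intro c a _ ha y hy
      rw [star_smul, smul_mul_assoc]
      exact W.smul_mem _ (ha y hy)
  have stepB : ∀ x ∈ S, ∀ y ∈ Y, star x * y ∈ closure (W : Set (H →L[ℂ] H)) := by
    intro x hx y hy
    rw [hY] at hy
    have hc : Continuous (fun T : H →L[ℂ] H => star x * T) := sw_cont_lmul (star x)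
    have hmt : Set.MapsTo (fun T : H →L[ℂ] H => star x * T) (S : Set (H →L[ℂ] H))
        (W : Set (H →L[ℂ] H)) := fun y hy => stepA x hx y hy
    exact (hmt.closure hc) hy
  have part3 : ∀ y₁ ∈ Y, ∀ y₂ ∈ Y,
      star y₁ * y₂ ∈ closure (W : Set (H →L[ℂ] H)) := by
    intro y₁ hy₁ y₂ hy₂
    rw [hY] at hy₁
    have hc : Continuous (fun T : H →L[ℂ] H => star T * y₂) := by
      have h1 : Continuous (fun T : H →L[ℂ] H => star T) := sw_cont_star
      have h2 : Continuous (fun T : H →L[ℂ] H => T * y₂) := sw_cont_rmul y₂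
      exact h2.comp h1
    have hmt : Set.MapsTo (fun T : H →L[ℂ] H => star T * y₂) (S : Set (H →L[ℂ] H))
        (closure (W : Set (H →L[ℂ] H))) := fun x hx => stepB x hx y₂ hy₂
    have := (hmt.closure hc) hy₁
    rwa [closure_closure] at this
  -- Part 4
  have key4 : ∀ a ∈ Z, ∀ b ∈ Z, ∀ x ∈ S, a * star b * x ∈ S := by
    intro a ha b hb x hx
    refine Submodule.span_induction ?_ ?_ ?_ ?_ hx
    · rintro x ⟨z, hz, m, hm, rfl⟩
      exact Submodule.subset_span
        ⟨a * star b * z, hWTRO a ha b hb z hz, m, hm, (mul_assoc _ _ _).symm⟩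
    · rw [mul_zero]; exact S.zero_mem
    · intro x y _ _ hx hy; rw [mul_add]; exact S.add_mem hx hy
    · intro c x _ hx; rw [mul_smul_comm]; exact S.smul_mem c hx
  have part4 : ∀ a ∈ Z, ∀ b ∈ Z, ∀ y ∈ Y, a * star b * y ∈ Y := by
    intro a ha b hb y hy
    rw [hY] at hy ⊢
    have hc : Continuous (fun T : H →L[ℂ] H => a * star b * T) := sw_cont_lmul (a * star b)
    exact (Set.MapsTo.closure (fun x hx => key4 a ha b hb x hx) hc) hy
  -- Part 5
  have huz : ∀ z ∈ Z, u * z = z := by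
    intro z hz
    have hzz : z * star z ∈ N := by
      rw [hN]
      exact subset_closure (Submodule.subset_span ⟨z, hz, z, hz, rfl⟩)
    have h1 : u * (z * star z) = z * star z := (hu _ hzz).1
    have h2 : (u * z - z) * star z = 0 := by
      rw [sub_mul, mul_assoc, h1, sub_self]
    have h3 : (u * z - z) * star (u * z - z) = 0 := by
      have hs : star (u * z - z) = star z * star u - star z := by
        rw [star_sub, star_mul]
      rw [hs, mul_sub, ← mul_assoc, h2, zero_mul, sub_self]
    have h4 : ‖u * z - z‖ * ‖u * z - z‖ = 0 := by
      rw [← CStarRing.norm_self_mul_star, h3, norm_zero]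
    have h5 : u * z - z = 0 := by
      rw [← norm_eq_zero]; exact mul_self_eq_zero.1 h4
    exact sub_eq_zero.1 h5
  have huS : ∀ x ∈ S, u * x = x := by
    intro x hx
    refine Submodule.span_induction ?_ ?_ ?_ ?_ hx
    · rintro x ⟨z, hz, m, hm, rfl⟩
      rw [← mul_assoc, huz z hz]
    · rw [mul_zero]
    · intro a b _ _ ha hb; rw [mul_add, ha, hb]
    · intro c a _ ha; rw [mul_smul_comm, ha]
  have hEclosed : IsClosed {T : H →L[ℂ] H | u * T = T} := by
    have hset : {T : H →L[ℂ] H | u * T = T} =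
        ⋂ (ξ : H) (η : H),
          {T : H →L[ℂ] H |
            (inner ℂ ((ContinuousLinearMap.adjoint u) η) (T ξ) : ℂ) = inner ℂ η (T ξ)} := by
      ext T
      simp only [Set.mem_setOf_eq, Set.mem_iInter]
      constructor
      · intro h ξ η
        rw [ContinuousLinearMap.adjoint_inner_left]
        conv_rhs => rw [← h]
        rfl
      · intro h
        ext ξ
        refine ext_inner_left ℂ fun η => ?_
        have := h ξ η
        rwa [ContinuousLinearMap.adjoint_inner_left] at this
    rw [hset]
    exact isClosed_iInter fun ξ => isClosed_iInter fun η =>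
      isClosed_eq (sw_cont_point _ _) (sw_cont_point _ _)
  have huY : ∀ y ∈ Y, u * y = y := by
    intro y hy
    rw [hY] at hy
    have hsub : closure (S : Set (H →L[ℂ] H)) ⊆ {T : H →L[ℂ] H | u * T = T} :=
      closure_minimal (fun x hx => huS x hx) hEclosed
    exact hsub hy
  have part5 : ∀ y ∈ Y, Tendsto (fun t => et t * y) atTop (nhds y) := by
    intro y hy
    have hc : Continuous (fun T : H →L[ℂ] H => T * y) := sw_cont_rmul y
    have h2 : u * y = y := huY y hy
    simpa [Function.comp_def, h2] using (hc.tendsto u).comp hconv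
  exact ⟨part1, part2, fun y₁ hy₁ y₂ hy₂ => part3 y₁ hy₁ y₂ hy₂, part4, part5⟩
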